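/- Let f* be a perfect matching of G of minimum total weight among all perfect matchings of G, and let L be an MMDC matching of minimum cost among all MMDC matchings between A and B. Then w_main(f*) ≥ c(L). -/

import Mathlib

/- The bipartite graph `G` of Rajabi-Alni and Bagheri, for the case
`∑ i, α' i > ∑ j, β j` (compensator set `Y` added to the right side `T`). -/

/-- Left vertex set `V_S`: copies `A_i`, extra copies `A'_i`, dummy sets `X_j`,
dummy sets `W_j`. -/
abbrev VS (s t : ℕ) (α α' : Fin s → ℕ) (β β' : Fin t → ℕ) : Type :=
  ((i : Fin s) × Fin (α i)) ⊕ ((i : Fin s) × Fin (α' i - α i)) ⊕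
    ((j : Fin t) × Fin (β' j - β j)) ⊕ ((j : Fin t) × Fin (s - β' j))

/-- Right vertex set `V_T`: the vertices `b_{j,i}` together with the compensator set `Y`. -/
abbrev VT (s t : ℕ) (α' : Fin s → ℕ) (β : Fin t → ℕ) : Type :=
  (Fin t × Fin s) ⊕ Fin (∑ i, α' i - ∑ j, β j)

variable {s t : ℕ}

/-- The allowed edges of `G`. -/
def Allowed (α α' : Fin s → ℕ) (β β' : Fin t → ℕ) :
    VS s t α α' β β' → VT s t α' β → Prop
  | Sum.inl ⟨i, _⟩, Sum.inl (_, i') => i' = i            -- A_i-copy to b_{j,i}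
  | Sum.inl _, Sum.inr _ => False
  | Sum.inr (Sum.inl ⟨i, _⟩), Sum.inl (_, i') => i' = i  -- A'_i-copy to b_{j,i}
  | Sum.inr (Sum.inl _), Sum.inr _ => True               -- A'_i-copy to Y
  | Sum.inr (Sum.inr (Sum.inl ⟨j, _⟩)), Sum.inl (j', _) => j' = j  -- X_j to b_{j,i}
  | Sum.inr (Sum.inr (Sum.inl _)), Sum.inr _ => True     -- X_j to Y
  | Sum.inr (Sum.inr (Sum.inr ⟨j, _⟩)), Sum.inl (j', _) => j' = j  -- W_j to b_{j,i}
  | Sum.inr (Sum.inr (Sum.inr _)), Sum.inr _ => False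

/-- The weights of the edges of `G`. -/
def weight (δ : Fin s → Fin t → ℝ) (γ' γ'' : ℝ) (α α' : Fin s → ℕ) (β β' : Fin t → ℕ) :
    VS s t α α' β β' → VT s t α' β → ℝ
  | Sum.inl ⟨i, _⟩, Sum.inl (j, _) => δ i j
  | Sum.inl _, Sum.inr _ => 0
  | Sum.inr (Sum.inl ⟨i, _⟩), Sum.inl (j, _) => δ i j
  | Sum.inr (Sum.inl _), Sum.inr _ => 0
  | Sum.inr (Sum.inr (Sum.inl _)), Sum.inl _ => γ'
  | Sum.inr (Sum.inr (Sum.inl _)), Sum.inr _ => γ''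
  | Sum.inr (Sum.inr (Sum.inr _)), _ => 0

/-- A perfect matching of `G`: a bijection `f : V_S → V_T` such that `(v, f v)` is an
allowed edge for every `v`. -/
def IsPerfectMatching (α α' : Fin s → ℕ) (β β' : Fin t → ℕ)
    (f : VS s t α α' β β' ≃ VT s t α' β) : Prop :=
  ∀ v, Allowed α α' β β' v (f v)

/-- Total weight of a perfect matching of `G`. -/
def totalWeight (δ : Fin s → Fin t → ℝ) (γ' γ'' : ℝ) (α α' : Fin s → ℕ) (β β' : Fin t → ℕ)
    (f : VS s t α α' β β' ≃ VT s t α' β) : ℝ :=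
  ∑ v, weight δ γ' γ'' α α' β β' v (f v)

/-- Main weight of a perfect matching of `G`: the sum of `δ i j` over those `v` in the
`A_i`'s and `A'_i`'s with `f v = b_{j,i}`. -/
def mainWeight (δ : Fin s → Fin t → ℝ) (α α' : Fin s → ℕ) (β β' : Fin t → ℕ)
    (f : VS s t α α' β β' ≃ VT s t α' β) : ℝ :=
  (∑ v : (i : Fin s) × Fin (α i),
    match f (Sum.inl v) with
    | Sum.inl (j, i') => if i' = v.1 then δ v.1 j else 0
    | Sum.inr _ => 0) +
  (∑ v : (i : Fin s) × Fin (α' i - α i),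
    match f (Sum.inr (Sum.inl v)) with
    | Sum.inl (j, i') => if i' = v.1 then δ v.1 j else 0
    | Sum.inr _ => 0)

/-- An MMDC matching between `A` and `B`: each `aᵢ` is matched to at least `α i` and at
most `α' i` points of `B`, and each `bⱼ` is matched to at least `β j` and at most `β' j`
points of `A`. -/
def IsMMDC {s t : ℕ} (α α' : Fin s → ℕ) (β β' : Fin t → ℕ)
    (L : Finset (Fin s × Fin t)) : Prop :=
  (∀ i, α i ≤ (L.filter fun p => p.1 = i).card ∧ (L.filter fun p => p.1 = i).card ≤ α' i) ∧
  (∀ j, β j ≤ (L.filter fun p => p.2 = j).card ∧ (L.filter fun p => p.2 = j).card ≤ β' j)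

/-- The cost of an MMDC matching. -/
def cost {s t : ℕ} (δ : Fin s → Fin t → ℝ) (L : Finset (Fin s × Fin t)) : ℝ :=
  ∑ p ∈ L, δ p.1 p.2


/-! The main edges of a perfect matching `f` of `G` form an MMDC matching whose cost is
`w_main(f)`. In row `i`, the `α i` copies in `A_i` can only be matched to vertices `b_{j,i}`,
and at most `α' i` vertices are copies of `a_i`. In column `j`, each of the `s` vertices
`b_{j,i}` is matched either to a copy of `a_i` or to a vertex of `X_j ∪ W_j`; all `s - β' j`
vertices of `W_j` are matched there and at most `β' j - β j` vertices of `X_j`, which leaves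
between `β j` and `β' j` main edges. -/

open Finset

theorem Finset.card_filter_sigma_fst_eq {ι : Type*} [Fintype ι] [DecidableEq ι] (κ : ι → Type*)
    [∀ i, Fintype (κ i)] (i : ι) : #{x : (i : ι) × κ i | x.1 = i} = Fintype.card (κ i) := by
  rw [card_filter, Fintype.sum_sigma]
  simp [apply_ite card]

theorem Finset.card_filter_equiv_symm_comp {V W ι : Type*} [Fintype V] [Fintype ι]
    [DecidableEq W] (e : V ≃ W) (g : ι ↪ W) (P : V → Prop) (Q : ι → Prop)
    [DecidablePred P] [DecidablePred Q] :
    #{x | Q x ∧ P (e.symm (g x))} = #{v | P v ∧ ∃ x, Q x ∧ e v = g x} := by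
  refine card_nbij (fun x => e.symm (g x)) ?_ ?_ ?_
  · intro x hx
    simp only [coe_filter, mem_univ, true_and, Set.mem_ofPred_eq] at hx ⊢
    exact ⟨hx.2, x, hx.1, by simp⟩
  · intro x _ y _ h
    simpa using h
  · rintro v hv
    simp only [coe_filter, mem_univ, true_and, Set.mem_ofPred_eq] at hv
    obtain ⟨hP, x, hQ, hx⟩ := hv
    exact ⟨x, by simp [hQ, ← hx, hP], by simp [← hx]⟩

section MainEdges

variable {α α' : Fin s → ℕ} {β β' : Fin t → ℕ}

def mainIndex : VS s t α α' β β' → Option (Fin s)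
  | Sum.inl ⟨i, _⟩ => some i
  | Sum.inr (Sum.inl ⟨i, _⟩) => some i
  | Sum.inr (Sum.inr _) => none

def dummyIndex : VS s t α α' β β' → Option (Fin t)
  | Sum.inl _ | Sum.inr (Sum.inl _) => none
  | Sum.inr (Sum.inr (Sum.inl ⟨j, _⟩)) => some j
  | Sum.inr (Sum.inr (Sum.inr ⟨j, _⟩)) => some j

def bVertex : Fin s × Fin t ↪ VT s t α' β :=
  ⟨fun p => Sum.inl (p.2, p.1), fun p q h => by
    simpa [Prod.ext_iff, and_comm] using h⟩

@[simp]
lemma bVertex_apply (p : Fin s × Fin t) : (bVertex p : VT s t α' β) = Sum.inl (p.2, p.1) := rfl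

lemma allowed_bVertex_iff {v : VS s t α α' β β'} {p : Fin s × Fin t} :
    Allowed α α' β β' v (bVertex p) ↔ mainIndex v = some p.1 ∨ dummyIndex v = some p.2 := by
  rw [bVertex_apply]
  rcases v with ⟨i, c⟩ | ⟨i, c⟩ | ⟨j, c⟩ | ⟨j, c⟩ <;>
    simp [Allowed, mainIndex, dummyIndex, eq_comm]

lemma mainIndex_eq_none_of_dummyIndex_eq_some {v : VS s t α α' β β'} {j : Fin t}
    (h : dummyIndex v = some j) : mainIndex v = none := by
  rcases v with ⟨i, c⟩ | ⟨i, c⟩ | ⟨j, c⟩ | ⟨j, c⟩ <;> simp_all [mainIndex, dummyIndex]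

lemma card_mainIndex_eq_some (i : Fin s) :
    #{v : VS s t α α' β β' | mainIndex v = some i} = α i + (α' i - α i) := by
  rw [card_filter, Fintype.sum_sum_type, Fintype.sum_sum_type]
  simp [mainIndex, card_filter_sigma_fst_eq]

lemma card_dummyIndex_eq_some (j : Fin t) :
    #{v : VS s t α α' β β' | dummyIndex v = some j} = (β' j - β j) + (s - β' j) := by
  rw [card_filter, Fintype.sum_sum_type, Fintype.sum_sum_type, Fintype.sum_sum_type]
  simp [dummyIndex, card_filter_sigma_fst_eq]

def mainEdges (f : VS s t α α' β β' ≃ VT s t α' β) : Finset (Fin s × Fin t) :=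
  {p | mainIndex (f.symm (bVertex p)) = some p.1}

def mainEdgeWeight (δ : Fin s → Fin t → ℝ) (v : VS s t α α' β β') : VT s t α' β → ℝ
  | Sum.inl (j, i) => if mainIndex v = some i then δ i j else 0
  | Sum.inr _ => 0

lemma mainEdgeWeight_of_mainIndex_eq_none (δ : Fin s → Fin t → ℝ) {v : VS s t α α' β β'}
    (hv : mainIndex v = none) (w : VT s t α' β) : mainEdgeWeight δ v w = 0 := by
  rcases w with _ | _ <;> simp [mainEdgeWeight, hv]

lemma mainWeight_eq_sum_mainEdgeWeight (δ : Fin s → Fin t → ℝ)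
    (f : VS s t α α' β β' ≃ VT s t α' β) :
    mainWeight δ α α' β β' f = ∑ v, mainEdgeWeight δ v (f v) := by
  rw [mainWeight, Fintype.sum_sum_type, Fintype.sum_sum_type,
    Fintype.sum_eq_zero (fun v => mainEdgeWeight δ (Sum.inr (Sum.inr v)) (f (Sum.inr (Sum.inr v))))
      fun v => mainEdgeWeight_of_mainIndex_eq_none δ rfl _, add_zero]
  congr 1 <;> refine Fintype.sum_congr _ _ fun v => ?_ <;>
    rcases f _ with ⟨j, i⟩ | _ <;> simp +contextual [mainEdgeWeight, mainIndex, eq_comm]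

lemma cost_mainEdges_eq_sum_mainEdgeWeight (δ : Fin s → Fin t → ℝ) (f : VS s t α α' β β' ≃ VT s t α' β) :
    cost δ (mainEdges f) = ∑ v, mainEdgeWeight δ v (f v) := by
  calc cost δ (mainEdges f) = ∑ w, mainEdgeWeight δ (f.symm w) w := by
        rw [cost, mainEdges, sum_filter, Fintype.sum_sum_type]
        simp only [mainEdgeWeight, sum_const_zero, add_zero]
        exact Fintype.sum_equiv (Equiv.prodComm _ _) _ _ fun p => rfl
    _ = ∑ v, mainEdgeWeight δ v (f v) := by
        rw [← f.sum_comp]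
        simp

namespace IsPerfectMatching

variable {f : VS s t α α' β β' ≃ VT s t α' β} (hf : IsPerfectMatching α α' β β' f)
include hf

lemma allowed_symm_apply (w : VT s t α' β) : Allowed α α' β β' (f.symm w) w := by
  simpa using hf (f.symm w)

lemma exists_apply_copy_eq (i : Fin s) (c : Fin (α i)) :
    ∃ j, f (Sum.inl ⟨i, c⟩) = bVertex (i, j) := by
  have h := hf (Sum.inl ⟨i, c⟩)
  rcases hv : f (Sum.inl ⟨i, c⟩) with ⟨j, i'⟩ | _ <;> rw [hv] at h
  · obtain rfl : i' = i := h
    exact ⟨j, rfl⟩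
  · exact h.elim

lemma exists_apply_dummyW_eq (j : Fin t) (c : Fin (s - β' j)) :
    ∃ i, f (Sum.inr (Sum.inr (Sum.inr ⟨j, c⟩))) = bVertex (i, j) := by
  have h := hf (Sum.inr (Sum.inr (Sum.inr ⟨j, c⟩)))
  rcases hv : f (Sum.inr (Sum.inr (Sum.inr ⟨j, c⟩))) with ⟨j', i⟩ | _ <;> rw [hv] at h
  · obtain rfl : j' = j := h
    exact ⟨i, rfl⟩
  · exact h.elim

lemma card_mainEdges_filter_fst (hαα' : ∀ i, α i ≤ α' i) (i : Fin s) :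
    α i ≤ #{p ∈ mainEdges f | p.1 = i} ∧ #{p ∈ mainEdges f | p.1 = i} ≤ α' i := by
  have hcard : #{p ∈ mainEdges f | p.1 = i} =
      #{v | mainIndex v = some i ∧ ∃ p : Fin s × Fin t, p.1 = i ∧ f v = bVertex p} := by
    rw [mainEdges, filter_filter, ← card_filter_equiv_symm_comp]
    exact congrArg card (filter_congr fun p _ => by grind)
  rw [hcard]
  constructor
  · calc α i = #(univ : Finset (Fin (α i))) := by simp
      _ ≤ _ := card_le_card_of_injOn (fun c => Sum.inl ⟨i, c⟩) (fun c _ => by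
          obtain ⟨j, hj⟩ := hf.exists_apply_copy_eq i c
          exact mem_filter.2 ⟨mem_univ _, rfl, (i, j), rfl, hj⟩) (by intro; simp)
  · calc _ ≤ #{v : VS s t α α' β β' | mainIndex v = some i} :=
          card_le_card (monotone_filter_right _ fun _ _ h => h.1)
      _ = α' i := by rw [card_mainIndex_eq_some]; have := hαα' i; omega

lemma card_mainEdges_filter_snd_add_card_dummyIndex (j : Fin t) :
    #{p ∈ mainEdges f | p.2 = j} +
      #{v | dummyIndex v = some j ∧ ∃ p : Fin s × Fin t, p.2 = j ∧ f v = bVertex p} = s := by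
  have hcol : #{p : Fin s × Fin t | p.2 = j} = s := by
    rw [card_filter, Fintype.sum_prod_type]
    simp
  have hdummy : ∀ p : Fin s × Fin t, p.2 = j →
      (¬mainIndex (f.symm (bVertex p)) = some p.1 ↔ dummyIndex (f.symm (bVertex p)) = some j) := by
    rintro p rfl
    refine ⟨(allowed_bVertex_iff.1 (hf.allowed_symm_apply _)).resolve_left, fun hd => ?_⟩
    rw [mainIndex_eq_none_of_dummyIndex_eq_some hd]
    simp
  have hpart := card_filter_add_card_filter_not (s := {p : Fin s × Fin t | p.2 = j})
    fun p => mainIndex (f.symm (bVertex p)) = some p.1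
  rw [hcol, filter_filter, filter_filter] at hpart
  refine Eq.trans ?_ hpart
  rw [mainEdges, filter_filter, ← card_filter_equiv_symm_comp]
  congr 2
  · exact filter_congr fun p _ => and_comm
  · exact filter_congr fun p _ => and_congr_right fun hp => (hdummy p hp).symm

lemma card_mainEdges_filter_snd (hββ' : ∀ j, β j ≤ β' j) (hβ's : ∀ j, β' j ≤ s) (j : Fin t) :
    β j ≤ #{p ∈ mainEdges f | p.2 = j} ∧ #{p ∈ mainEdges f | p.2 = j} ≤ β' j := by
  have hsplit := hf.card_mainEdges_filter_snd_add_card_dummyIndex j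
  set D := #{v | dummyIndex v = some j ∧ ∃ p : Fin s × Fin t, p.2 = j ∧ f v = bVertex p}
  have hD_ge : s - β' j ≤ D := by
    calc s - β' j = #(univ : Finset (Fin (s - β' j))) := by simp
      _ ≤ D := card_le_card_of_injOn (fun c => Sum.inr (Sum.inr (Sum.inr ⟨j, c⟩))) (fun c _ => by
          obtain ⟨i, hi⟩ := hf.exists_apply_dummyW_eq j c
          exact mem_filter.2 ⟨mem_univ _, rfl, (i, j), rfl, hi⟩) (by intro; simp)
  have hD_le : D ≤ (β' j - β j) + (s - β' j) :=
    (card_le_card (monotone_filter_right _ fun _ _ h => h.1)).trans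
      (card_dummyIndex_eq_some j).le
  have := hββ' j
  have := hβ's j
  omega

lemma isMMDC_mainEdges (hαα' : ∀ i, α i ≤ α' i) (hββ' : ∀ j, β j ≤ β' j)
    (hβ's : ∀ j, β' j ≤ s) : IsMMDC α α' β β' (mainEdges f) :=
  ⟨hf.card_mainEdges_filter_fst hαα', hf.card_mainEdges_filter_snd hββ' hβ's⟩

end IsPerfectMatching

end MainEdges

theorem cost_le_mainWeight_general
    (s t : ℕ)
    (δ : Fin s → Fin t → ℝ) (α α' : Fin s → ℕ) (β β' : Fin t → ℕ)
    (hαα' : ∀ i, α i ≤ α' i)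
    (hββ' : ∀ j, β j ≤ β' j) (hβ's : ∀ j, β' j ≤ s)
    (f : VS s t α α' β β' ≃ VT s t α' β)
    (hf : IsPerfectMatching α α' β β' f)
    (L : Finset (Fin s × Fin t))
    (hLmin : ∀ L', IsMMDC α α' β β' L' → cost δ L ≤ cost δ L') :
    cost δ L ≤ mainWeight δ α α' β β' f := by
  rw [mainWeight_eq_sum_mainEdgeWeight, ← cost_mainEdges_eq_sum_mainEdgeWeight]
  exact hLmin _ (hf.isMMDC_mainEdges hαα' hββ' hβ's)

/-- **Lemma 2.** If `f*` is a minimum-total-weight perfect matching of `G`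
and `L` is a minimum-cost MMDC matching, then `w_main(f*) ≥ c(L)`. -/
theorem cost_le_mainWeight
    (s t : ℕ) (hs : 0 < s) (ht : 0 < t)
    (δ : Fin s → Fin t → ℝ) (α α' : Fin s → ℕ) (β β' : Fin t → ℕ)
    (hαα' : ∀ i, α i ≤ α' i) (hα't : ∀ i, α' i ≤ t)
    (hββ' : ∀ j, β j ≤ β' j) (hβ's : ∀ j, β' j ≤ s)
    (hbal : ∑ j, β j < ∑ i, α' i)
    (γ' γ'' : ℝ) (hγ : γ' < γ'') (hγδ : ∀ i j, γ'' < δ i j)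
    (f : VS s t α α' β β' ≃ VT s t α' β)
    (hf : IsPerfectMatching α α' β β' f)
    (hfmin : ∀ g : VS s t α α' β β' ≃ VT s t α' β, IsPerfectMatching α α' β β' g →
      totalWeight δ γ' γ'' α α' β β' f ≤ totalWeight δ γ' γ'' α α' β β' g)
    (L : Finset (Fin s × Fin t)) (hL : IsMMDC α α' β β' L)
    (hLmin : ∀ L', IsMMDC α α' β β' L' → cost δ L ≤ cost δ L') :
    cost δ L ≤ mainWeight δ α α' β β' f :=
  cost_le_mainWeight_general s t δ α α' β β' hαα' hββ' hβ's f hf L hLmin
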